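/- Let K ≥ 2, α ∈ (0,1), β > 0, γ ≥ 6, L ∈ ℝ^K, h ∈ [−1,1], and let x'_1 > 0 be a real number. Suppose x minimizes F_{L,β,γ} and y minimizes F_{L+(h/x'_1)e_1, β, γ}. If 4·x'_1 ≥ x_1, then y_1 ≤ 3·x_1. -/

import Mathlib

open Finset

/-- The hybrid FTRL objective
`F_{L,β,γ}(p) = ⟨L,p⟩ + (β/α)(1 − Σᵢ pᵢ^α) − γ Σᵢ ln pᵢ`. -/
noncomputable def hybridF {K : ℕ} (α β γ : ℝ) (L p : Fin K → ℝ) : ℝ :=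
  (∑ i, L i * p i) + (β / α) * (1 - ∑ i, p i ^ α) - γ * ∑ i, Real.log (p i)

/-- The positive probability simplex. -/
def posSimplex {K : ℕ} (p : Fin K → ℝ) : Prop :=
  (∀ i, 0 < p i) ∧ ∑ i, p i = 1

/-- `x` minimizes `F_{L,β,γ}` over the positive simplex. -/
def MinimizesF {K : ℕ} (α β γ : ℝ) (L x : Fin K → ℝ) : Prop :=
  posSimplex x ∧ ∀ p : Fin K → ℝ, posSimplex p → hybridF α β γ L x ≤ hybridF α β γ L p

/-- `x_* = min(maxᵢ xᵢ, 1 − maxᵢ xᵢ)`. -/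
noncomputable def vecStar {K : ℕ} (x : Fin K → ℝ) : ℝ :=
  min (⨆ i, x i) (1 - ⨆ i, x i)

lemma sum_split_two {K : ℕ} (i j : Fin K) (hij : i ≠ j) (g : Fin K → ℝ) :
    ∑ k, g k = g i + (g j + ∑ k ∈ univ \ {i, j}, g k) := by
  rw [← Finset.sum_sdiff (Finset.subset_univ {i, j}), Finset.sum_pair hij]
  ring

lemma kkt_pair {K : ℕ} {α β γ : ℝ} (hα : α ∈ Set.Ioo (0:ℝ) 1)
    (L x : Fin K → ℝ) (hx : MinimizesF α β γ L x) (i j : Fin K) (hij : i ≠ j) :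
    L i - β * x i ^ (α - 1) - γ / x i = L j - β * x j ^ (α - 1) - γ / x j := by
  classical
  obtain ⟨⟨hxpos, hxsum⟩, hmin⟩ := hx
  have hxi := hxpos i
  have hxj := hxpos j
  have hji : j ≠ i := Ne.symm hij
  set SL : ℝ := ∑ k ∈ univ \ ({i, j} : Finset (Fin K)), L k * x k with hSL
  set SP : ℝ := ∑ k ∈ univ \ ({i, j} : Finset (Fin K)), x k ^ α with hSP
  set SG : ℝ := ∑ k ∈ univ \ ({i, j} : Finset (Fin K)), Real.log (x k) with hSG
  set pt : ℝ → Fin K → ℝ :=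
    fun t k => if k = i then x i + t else if k = j then x j - t else x k with hptdef
  set φ : ℝ → ℝ := fun t =>
    L i * (x i + t) + (L j * (x j - t) + SL)
    + (β / α) * (1 - ((x i + t) ^ α + ((x j - t) ^ α + SP)))
    - γ * (Real.log (x i + t) + (Real.log (x j - t) + SG)) with hφdef
  have hmem : ∀ (t : ℝ), ∀ k ∈ univ \ ({i, j} : Finset (Fin K)), pt t k = x k := by
    intro t k hk
    simp only [mem_sdiff, mem_insert, mem_singleton] at hk
    push_neg at hk
    simp [hptdef, hk.2.1, hk.2.2]
  have heq : ∀ t : ℝ, hybridF α β γ L (pt t) = φ t := by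
    intro t
    have hs1 : ∑ k ∈ univ \ ({i, j} : Finset (Fin K)), L k * pt t k = SL := by
      rw [hSL]; exact Finset.sum_congr rfl fun k hk => by rw [hmem t k hk]
    have hs2 : ∑ k ∈ univ \ ({i, j} : Finset (Fin K)), pt t k ^ α = SP := by
      rw [hSP]; exact Finset.sum_congr rfl fun k hk => by rw [hmem t k hk]
    have hs3 : ∑ k ∈ univ \ ({i, j} : Finset (Fin K)), Real.log (pt t k) = SG := by
      rw [hSG]; exact Finset.sum_congr rfl fun k hk => by rw [hmem t k hk]
    unfold hybridF
    rw [sum_split_two i j hij (fun k => L k * pt t k),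
        sum_split_two i j hij (fun k => pt t k ^ α),
        sum_split_two i j hij (fun k => Real.log (pt t k)), hs1, hs2, hs3]
    simp [hφdef, hptdef, hji]
  have hpt0 : pt 0 = x := by
    funext k
    by_cases h1 : k = i
    · subst h1; simp [hptdef]
    · by_cases h2 : k = j
      · subst h2; simp [hptdef, h1]
      · simp [hptdef, h1, h2]
  have hxsplit := sum_split_two i j hij x
  have hloc : IsLocalMin φ 0 := by
    have hnb : Set.Ioo (-(x i)) (x j) ∈ nhds (0:ℝ) := Ioo_mem_nhds (by linarith) hxj
    filter_upwards [hnb] with t ht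
    have h1 : 0 < x i + t := by have := ht.1; simp at this ⊢; linarith
    have h2 : 0 < x j - t := by have := ht.2; linarith
    have hps : posSimplex (pt t) := by
      constructor
      · intro k
        by_cases hk1 : k = i
        · subst hk1; simpa [hptdef] using h1
        · by_cases hk2 : k = j
          · subst hk2; simpa [hptdef, hk1] using h2
          · simpa [hptdef, hk1, hk2] using hxpos k
      · rw [sum_split_two i j hij (pt t)]
        have hs : ∑ k ∈ univ \ ({i, j} : Finset (Fin K)), pt t k
            = ∑ k ∈ univ \ ({i, j} : Finset (Fin K)), x k :=
          Finset.sum_congr rfl fun k hk => hmem t k hk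
        rw [hs]
        simp only [hptdef, if_pos rfl, if_neg hji, if_true]
        rw [hxsum] at hxsplit
        linarith
    have e0 : φ 0 = hybridF α β γ L x := by rw [← heq 0, hpt0]
    rw [e0, ← heq t]
    exact hmin _ hps
  -- derivative pieces
  have hi' : HasDerivAt (fun t : ℝ => x i + t) 1 0 := by
    simpa using (hasDerivAt_id (0:ℝ)).const_add (x i)
  have hj' : HasDerivAt (fun t : ℝ => x j - t) (-1) 0 := by
    simpa using (hasDerivAt_id (0:ℝ)).const_sub (x j)
  have hpi : HasDerivAt (fun t : ℝ => (x i + t) ^ α) (α * x i ^ (α - 1)) 0 := by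
    have h0 : HasDerivAt (fun s : ℝ => s ^ α) (α * (x i + 0) ^ (α - 1)) (x i + 0) := by
      rw [add_zero]; exact Real.hasDerivAt_rpow_const (Or.inl hxi.ne')
    simpa [Function.comp_def] using h0.comp 0 hi'
  have hpj : HasDerivAt (fun t : ℝ => (x j - t) ^ α) (-(α * x j ^ (α - 1))) 0 := by
    have h0 : HasDerivAt (fun s : ℝ => s ^ α) (α * (x j - 0) ^ (α - 1)) (x j - 0) := by
      rw [sub_zero]; exact Real.hasDerivAt_rpow_const (Or.inl hxj.ne')
    simpa [Function.comp_def] using h0.comp 0 hj'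
  have hli : HasDerivAt (fun t : ℝ => Real.log (x i + t)) (x i)⁻¹ 0 := by
    have h0 : HasDerivAt Real.log (x i + 0)⁻¹ (x i + 0) := by
      rw [add_zero]; exact Real.hasDerivAt_log hxi.ne'
    simpa [Function.comp_def] using h0.comp 0 hi'
  have hlj : HasDerivAt (fun t : ℝ => Real.log (x j - t)) (-(x j)⁻¹) 0 := by
    have h0 : HasDerivAt Real.log (x j - 0)⁻¹ (x j - 0) := by
      rw [sub_zero]; exact Real.hasDerivAt_log hxj.ne'
    simpa [Function.comp_def] using h0.comp 0 hj'
  have hφ' : HasDerivAt φ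
      ((L i * 1 + L j * (-1))
        + (β / α) * (-(α * x i ^ (α - 1) + -(α * x j ^ (α - 1))))
        - γ * ((x i)⁻¹ + -(x j)⁻¹)) 0 := by
    exact ((((hi'.const_mul (L i)).add ((hj'.const_mul (L j)).add_const SL)).add
      (((hpi.add (hpj.add_const SP)).const_sub 1).const_mul (β / α))).sub
      ((hli.add (hlj.add_const SG)).const_mul γ))
  have hzero := hloc.hasDerivAt_eq_zero hφ'
  have hαne : α ≠ 0 := ne_of_gt hα.1
  have hcancel : (β / α) * (-(α * x i ^ (α - 1) + -(α * x j ^ (α - 1))))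
      = β * x j ^ (α - 1) - β * x i ^ (α - 1) := by
    field_simp
    ring
  rw [hcancel] at hzero
  rw [div_eq_mul_inv, div_eq_mul_inv]
  have hexp : γ * ((x i)⁻¹ + -(x j)⁻¹) = γ * (x i)⁻¹ - γ * (x j)⁻¹ := by ring
  rw [hexp] at hzero
  linarith

/-- **Stability under a one-coordinate loss perturbation (Lemma 4).**
If `x` minimizes `F_{L,β,γ}` and `y` minimizes `F_{L+(h/x'₁)e₁,β,γ}` with
`γ ≥ 6`, `h ∈ [−1,1]`, `x'₁ > 0` and `4x'₁ ≥ x₁`, then `y₁ ≤ 3x₁`. -/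
theorem stmt2 {K : ℕ} (hK : 2 ≤ K) {α β γ h x1' : ℝ}
    (hα : α ∈ Set.Ioo (0:ℝ) 1) (hβ : 0 < β) (hγ : 6 ≤ γ)
    (hh : h ∈ Set.Icc (-1:ℝ) 1) (hx1' : 0 < x1')
    (L x y : Fin K → ℝ)
    (hx : MinimizesF α β γ L x)
    (hy : MinimizesF α β γ
      (fun i => L i + (h / x1') * (if (i : ℕ) = 0 then 1 else 0)) y)
    (h4 : 4 * x1' ≥ x ⟨0, by omega⟩) :
    y ⟨0, by omega⟩ ≤ 3 * x ⟨0, by omega⟩ := by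
  classical
  set i0 : Fin K := ⟨0, by omega⟩ with hi0
  by_contra hcon
  push_neg at hcon
  have hxpos := hx.1.1
  have hypos := hy.1.1
  have hxsum := hx.1.2
  have hysum := hy.1.2
  have ha : 0 < x i0 := hxpos i0
  have hb : 0 < y i0 := hypos i0
  have hxy0 : x i0 < y i0 := by linarith
  -- find j ≠ i0 with y j < x j
  have hex : ∃ j, j ≠ i0 ∧ y j < x j := by
    by_contra hc
    push_neg at hc
    have hsum : ∑ k ∈ univ.erase i0, x k ≤ ∑ k ∈ univ.erase i0, y k := by
      apply Finset.sum_le_sum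
      intro k hk
      exact hc k (Finset.ne_of_mem_erase hk)
    have e1 : x i0 + ∑ k ∈ univ.erase i0, x k = 1 := by
      rw [Finset.add_sum_erase _ _ (Finset.mem_univ i0), hxsum]
    have e2 : y i0 + ∑ k ∈ univ.erase i0, y k = 1 := by
      rw [Finset.add_sum_erase _ _ (Finset.mem_univ i0), hysum]
    linarith
  obtain ⟨j, hjne, hyxj⟩ := hex
  have hvj : 0 < y j := hypos j
  have huj : 0 < x j := hxpos j
  have e1 := kkt_pair hα L x hx i0 j (Ne.symm hjne)
  have e2 := kkt_pair hα _ y hy i0 j (Ne.symm hjne)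
  have hj0 : ¬((j : ℕ) = 0) := by
    intro hc
    exact hjne (Fin.ext (by simp [hc, hi0]))
  have hi0v : ((i0 : Fin K) : ℕ) = 0 := rfl
  rw [if_pos hi0v, if_neg hj0, mul_one, mul_zero, add_zero] at e2
  -- abbreviations
  have hαneg : α - 1 < 0 := by linarith [hα.2]
  have hm1 : β * (y i0) ^ (α - 1) < β * (x i0) ^ (α - 1) :=
    mul_lt_mul_of_pos_left (Real.rpow_lt_rpow_of_neg ha hxy0 hαneg) hβ
  have hm2 : β * (x j) ^ (α - 1) < β * (y j) ^ (α - 1) :=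
    mul_lt_mul_of_pos_left (Real.rpow_lt_rpow_of_neg hvj hyxj hαneg) hβ
  have hγ0 : (0:ℝ) < γ := by linarith
  have hguv : γ / x j < γ / y j := div_lt_div_of_pos_left hγ0 hvj hyxj
  have hkey : 4 / x i0 < γ / x i0 - γ / y i0 := by
    rw [div_sub_div _ _ (ne_of_gt ha) (ne_of_gt hb), div_lt_div_iff₀ ha (mul_pos ha hb)]
    nlinarith [mul_pos ha hb, mul_pos ha ha,
      mul_lt_mul_of_pos_left hcon (show (0:ℝ) < γ - 4 by linarith)]
  have hcineq : -(4 / x i0) ≤ h / x1' := by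
    have h1 : (1:ℝ) / x1' ≤ 4 / x i0 := by
      rw [div_le_div_iff₀ hx1' ha]; linarith
    have h2 : (-1 : ℝ) / x1' ≤ h / x1' := by
      gcongr
      exact hh.1
    have h3 : (-1 : ℝ) / x1' = -(1 / x1') := by ring
    linarith
  linarith [e1, e2, hm1, hm2, hguv, hkey, hcineq]
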